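/- arXiv:2306.04898 — 2 statements merged into one kernel-verified Lean document; each statement's English description precedes it below -/
import Mathlib

section
/- Let C ⊆ ℝ^{d_c}, S₁ ⊆ ℝ^{d_{s₁}}, S₂ ⊆ ℝ^{d_{s₂}} be open convex sets. Let h : C × S₁ × S₂ → ℝ^{d_c} × ℝ^{d_{s₁}} be differentiable, let g₁ : C × S₁ → ℝ^{d_{v₁}} be differentiable, and let ĝ₁ : ℝ^{d_c} × ℝ^{d_{s₁}} → ℝ^{d_{v₁}} be differentiable with injective Fréchet derivative at every point of the range of h. If g₁(c, s₁) = ĝ₁(h(c, s₁, s₂)) for all (c, s₁, s₂) ∈ C × S₁ × S₂, then h does not depend on s₂: h(c, s₁, s₂) = h(c, s₁, s₂') for all (c, s₁) ∈ C × S₁ and s₂, s₂' ∈ S₂. -/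
/-!
Fix `(c, s₁)` and put `f t = h (c, s₁, t)`. The equation says that `ĝ₁ ∘ f` equals the constant
`g₁ (c, s₁)` on the open set `S₂`, so by the chain rule `Dĝ₁(f t) ∘ Df(t) = 0`; injectivity of
`Dĝ₁` forces `Df = 0` on `S₂`, and a function with vanishing derivative on a connected open set
is constant.
-/

open Filter Topology

section

variable {𝕜 : Type*} [RCLike 𝕜]
  {E : Type*} [NormedAddCommGroup E] [NormedSpace 𝕜 E]
  {F : Type*} [NormedAddCommGroup F] [NormedSpace 𝕜 F]
  {G : Type*} [NormedAddCommGroup G] [NormedSpace 𝕜 G]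
  {f : E → F} {g : F → G} {b : G}

theorem fderiv_eq_zero_of_comp_eventuallyEq_const {x : E}
    (hg : DifferentiableAt 𝕜 g (f x)) (hf : DifferentiableAt 𝕜 f x)
    (hinj : Function.Injective (fderiv 𝕜 g (f x))) (hconst : g ∘ f =ᶠ[𝓝 x] fun _ => b) :
    fderiv 𝕜 f x = 0 := by
  have hcomp : (fderiv 𝕜 g (f x)).comp (fderiv 𝕜 f x) = 0 := by
    rw [← fderiv_comp x hg hf, hconst.fderiv_eq, fderiv_const_apply]
  ext1 v
  apply hinj
  simpa using DFunLike.congr_fun hcomp v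

theorem IsOpen.is_const_of_comp_const_of_injective_fderiv {s : Set E}
    (hs : IsOpen s) (hs' : IsPreconnected s) (hf : DifferentiableOn 𝕜 f s)
    (hg : ∀ x ∈ s, DifferentiableAt 𝕜 g (f x))
    (hinj : ∀ x ∈ s, Function.Injective (fderiv 𝕜 g (f x)))
    (hconst : ∀ x ∈ s, g (f x) = b) {x y : E} (hx : x ∈ s) (hy : y ∈ s) : f x = f y := by
  let : NormedSpace ℝ E := NormedSpace.restrictScalars ℝ 𝕜 E
  refine hs.is_const_of_fderiv_eq_zero hs' hf (fun z hz => ?_) hx hy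
  exact fderiv_eq_zero_of_comp_eventuallyEq_const (hg z hz)
    (hf.differentiableAt (hs.mem_nhds hz)) (hinj z hz)
    (eventually_of_mem (hs.mem_nhds hz) hconst)

end

theorem h_independent_of_s₂_general
    {dc ds₁ ds₂ dv₁ : ℕ}
    (C : Set (Fin dc → ℝ)) (S₁ : Set (Fin ds₁ → ℝ)) (S₂ : Set (Fin ds₂ → ℝ))
    (hS₂ : IsOpen S₂) (hS₂conv : Convex ℝ S₂)
    (h : (Fin dc → ℝ) × (Fin ds₁ → ℝ) × (Fin ds₂ → ℝ) → (Fin dc → ℝ) × (Fin ds₁ → ℝ))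
    (g₁ : (Fin dc → ℝ) × (Fin ds₁ → ℝ) → (Fin dv₁ → ℝ))
    (ghat₁ : (Fin dc → ℝ) × (Fin ds₁ → ℝ) → (Fin dv₁ → ℝ))
    (hhdiff : ∀ p ∈ C ×ˢ (S₁ ×ˢ S₂), DifferentiableAt ℝ h p)
    (hghat₁diff : Differentiable ℝ ghat₁)
    (hghat₁inj : ∀ p ∈ C ×ˢ (S₁ ×ˢ S₂), Function.Injective (fderiv ℝ ghat₁ (h p)))
    (heq : ∀ c ∈ C, ∀ s₁ ∈ S₁, ∀ s₂ ∈ S₂, g₁ (c, s₁) = ghat₁ (h (c, s₁, s₂))) :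
    ∀ c ∈ C, ∀ s₁ ∈ S₁, ∀ s₂ ∈ S₂, ∀ s₂' ∈ S₂, h (c, s₁, s₂) = h (c, s₁, s₂') := by
  intro c hc s₁ hs₁ s₂ hs₂ s₂' hs₂'
  have hslice : DifferentiableOn ℝ (fun t => h (c, s₁, t)) S₂ := fun t ht =>
    ((hhdiff _ ⟨hc, hs₁, ht⟩).comp t (by fun_prop)).differentiableWithinAt
  exact hS₂.is_const_of_comp_const_of_injective_fderiv hS₂conv.isPreconnected hslice
    (fun t _ => hghat₁diff _) (fun t ht => hghat₁inj _ ⟨hc, hs₁, ht⟩)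
    (fun t ht => (heq c hc s₁ hs₁ t ht).symm) hs₂ hs₂'

/-- Functional-equation lemma: if `g₁ (c, s₁) = ghat₁ (h (c, s₁, s₂))` on the open convex
domain `C × S₁ × S₂`, where `h`, `g₁` are differentiable there, and `ghat₁` is
differentiable with injective Fréchet derivative at every point of the range of `h`,
then `h` does not depend on `s₂`. -/
theorem h_independent_of_s₂
    {dc ds₁ ds₂ dv₁ : ℕ}
    (C : Set (Fin dc → ℝ)) (S₁ : Set (Fin ds₁ → ℝ)) (S₂ : Set (Fin ds₂ → ℝ))
    (hC : IsOpen C) (hCconv : Convex ℝ C)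
    (hS₁ : IsOpen S₁) (hS₁conv : Convex ℝ S₁)
    (hS₂ : IsOpen S₂) (hS₂conv : Convex ℝ S₂)
    (h : (Fin dc → ℝ) × (Fin ds₁ → ℝ) × (Fin ds₂ → ℝ) → (Fin dc → ℝ) × (Fin ds₁ → ℝ))
    (g₁ : (Fin dc → ℝ) × (Fin ds₁ → ℝ) → (Fin dv₁ → ℝ))
    (ghat₁ : (Fin dc → ℝ) × (Fin ds₁ → ℝ) → (Fin dv₁ → ℝ))
    (hhdiff : ∀ p ∈ C ×ˢ (S₁ ×ˢ S₂), DifferentiableAt ℝ h p)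
    (hg₁diff : ∀ q ∈ C ×ˢ S₁, DifferentiableAt ℝ g₁ q)
    (hghat₁diff : Differentiable ℝ ghat₁)
    (hghat₁inj : ∀ p ∈ C ×ˢ (S₁ ×ˢ S₂), Function.Injective (fderiv ℝ ghat₁ (h p)))
    (heq : ∀ c ∈ C, ∀ s₁ ∈ S₁, ∀ s₂ ∈ S₂, g₁ (c, s₁) = ghat₁ (h (c, s₁, s₂))) :
    ∀ c ∈ C, ∀ s₁ ∈ S₁, ∀ s₂ ∈ S₂, ∀ s₂' ∈ S₂, h (c, s₁, s₂) = h (c, s₁, s₂') :=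
  h_independent_of_s₂_general C S₁ S₂ hS₂ hS₂conv h g₁ ghat₁ hhdiff hghat₁diff hghat₁inj heq
end

section
/- Let d_c, d_{s₁}, d_{s₂}, d_{v₁}, d_{v₂} be natural numbers. Let g₁, ĝ₁ : ℝ^{d_c} × ℝ^{d_{s₁}} → ℝ^{d_{v₁}} and g₂, ĝ₂ : ℝ^{d_c} × ℝ^{d_{s₂}} → ℝ^{d_{v₂}} be continuously differentiable maps whose Fréchet derivatives are injective at Lebesgue-almost every point of their domains. Define g, ĝ : ℝ^{d_c} × ℝ^{d_{s₁}} × ℝ^{d_{s₂}} → ℝ^{d_{v₁}} × ℝ^{d_{v₂}} by g(c, s₁, s₂) = (g₁(c, s₁), g₂(c, s₂)) and ĝ(c, s₁, s₂) = (ĝ₁(c, s₁), ĝ₂(c, s₂)). Assume g and ĝ are injective with the same range, and that both g and ĝ are C¹ diffeomorphisms onto this common range (in particular their inverses are continuously differentiable on it). Then there exists a bijection k : ℝ^{d_c} → ℝ^{d_c} such that for all (c, s₁, s₂), the first block (the ℝ^{d_c}-component) of ĝ⁻¹(g(c, s₁, s₂)) equals k(c). -/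
/-!
Put `h = ghat⁻¹ ∘ g`, a `C¹` self-map of `C × S₁ × S₂` with the differentiable left inverse
`g⁻¹ ∘ ghat`, and satisfying `ghat₁ ((h x).1, (h x).2.1) = g₁ (x.1, x.2.1)` and the analogous
identity for the second view. Differentiating the first identity in a direction `v` of `S₂` gives
`D ghat₁ (π₁ (Dh v)) = 0`, so wherever `D ghat₁` is injective the content component of `Dh` kills
`S₂`; the second view does the same for `S₁`. For a null set `N`, `h⁻¹ N` lies in the image of `N`
under the left inverse, hence is null, so this holds almost everywhere, and by continuity of `Dh`
everywhere. Thus the content of `h x` depends only on the content of `x`. The same holds for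
`h⁻¹ = g⁻¹ ∘ ghat`, and the two induced maps on contents are mutually inverse.
-/

open MeasureTheory Function

instance Prod.isAddHaarMeasure_volume {E F : Type*} [NormedAddCommGroup E] [NormedSpace ℝ E]
    [FiniteDimensional ℝ E] [MeasureSpace E] [BorelSpace E] [(volume : Measure E).IsAddHaarMeasure]
    [NormedAddCommGroup F] [NormedSpace ℝ F] [FiniteDimensional ℝ F] [MeasureSpace F]
    [BorelSpace F] [(volume : Measure F).IsAddHaarMeasure] :
    (volume : Measure (E × F)).IsAddHaarMeasure :=
  Measure.prod.instIsAddHaarMeasure volume volume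

section HaarNullSets

variable {E F : Type*} [NormedAddCommGroup E] [NormedSpace ℝ E] [FiniteDimensional ℝ E]
  [MeasurableSpace E] [BorelSpace E] (μ : Measure E) [μ.IsAddHaarMeasure]

theorem LinearMap.quasiMeasurePreserving_of_surjective [NormedAddCommGroup F] [NormedSpace ℝ F]
    [MeasurableSpace F] [BorelSpace F] (ν : Measure F) [ν.IsAddHaarMeasure]
    (L : E →ₗ[ℝ] F) (hL : Surjective L) : Measure.QuasiMeasurePreserving L μ ν := by
  obtain ⟨c, -, hc⟩ := L.exists_map_addHaar_eq_smul_addHaar μ ν hL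
  exact ⟨L.continuous_of_finiteDimensional.measurable, hc ▸ Measure.smul_absolutelyContinuous⟩

theorem ae_comp_of_leftInverse {h h' : E → E} (hh' : Differentiable ℝ h')
    (hleft : LeftInverse h' h) {p : E → Prop} (hp : ∀ᵐ x ∂μ, p x) : ∀ᵐ x ∂μ, p (h x) := by
  rw [ae_iff] at hp ⊢
  refine measure_mono_null (fun x hx => ?_)
    (addHaar_image_eq_zero_of_differentiableOn_of_addHaar_eq_zero μ hh'.differentiableOn hp)
  exact ⟨h x, hx, hleft x⟩

end HaarNullSets

theorem map_fderiv_apply_eq_zero_of_comp_eq {X Y X' Y' Z : Type*}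
    [NormedAddCommGroup X] [NormedSpace ℝ X] [NormedAddCommGroup Y] [NormedSpace ℝ Y]
    [NormedAddCommGroup X'] [NormedSpace ℝ X'] [NormedAddCommGroup Y'] [NormedSpace ℝ Y']
    [NormedAddCommGroup Z] [NormedSpace ℝ Z]
    {h : X → Y} {f : Y' → Z} {g : X' → Z} (P : Y →L[ℝ] Y') (Q : X →L[ℝ] X')
    (hcomp : ∀ x, f (P (h x)) = g (Q x)) {x : X} (hh : DifferentiableAt ℝ h x)
    (hf : DifferentiableAt ℝ f (P (h x))) (hg : DifferentiableAt ℝ g (Q x))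
    (hinj : Injective (fderiv ℝ f (P (h x)))) {v : X} (hv : Q v = 0) :
    P (fderiv ℝ h x v) = 0 := by
  have hderiv :
      (fderiv ℝ f (P (h x))).comp (P.comp (fderiv ℝ h x)) = (fderiv ℝ g (Q x)).comp Q := by
    have hlhs := hf.hasFDerivAt.comp x (P.hasFDerivAt.comp x hh.hasFDerivAt)
    rw [show f ∘ P ∘ h = g ∘ Q from funext hcomp] at hlhs
    exact hlhs.unique (hg.hasFDerivAt.comp x Q.hasFDerivAt)
  refine hinj ?_
  simpa [hv] using DFunLike.congr_fun hderiv v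

theorem apply_mk_eq_of_ae_fderiv_comp_inr_eq_zero {E F G : Type*}
    [NormedAddCommGroup E] [NormedSpace ℝ E] [NormedAddCommGroup F] [NormedSpace ℝ F]
    [NormedAddCommGroup G] [NormedSpace ℝ G] [MeasurableSpace (E × F)]
    (μ : Measure (E × F)) [μ.IsOpenPosMeasure] {f : E × F → G} (hf : ContDiff ℝ 1 f)
    (hf0 : ∀ᵐ x ∂μ, (fderiv ℝ f x).comp (ContinuousLinearMap.inr ℝ E F) = 0) (c : E) (s t : F) :
    f (c, s) = f (c, t) := by
  have hpartial : ∀ x, (fderiv ℝ f x).comp (ContinuousLinearMap.inr ℝ E F) = 0 :=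
    congrFun ((Continuous.ae_eq_iff_eq μ
      ((hf.continuous_fderiv one_ne_zero).clm_comp continuous_const) continuous_const).1 hf0)
  have hslice : ∀ s, HasFDerivAt (fun s => f (c, s))
      ((fderiv ℝ f (c, s)).comp (ContinuousLinearMap.inr ℝ E F)) s := fun s =>
    ((hf.differentiable one_ne_zero) (c, s)).hasFDerivAt.comp s (hasFDerivAt_prodMk_right c s)
  exact is_const_of_fderiv_eq_zero (fun s => (hslice s).differentiableAt)
    (fun s => (hslice s).fderiv.trans (hpartial _)) s t

theorem Function.LeftInverse.comp_of_range_subset {α β γ : Type*} {g : α → γ} {ghat : β → γ}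
    {gInv : γ → α} {ghatInv : γ → β} (hgInv : LeftInverse gInv g)
    (hghatInv : LeftInverse ghatInv ghat) (hrange : Set.range g ⊆ Set.range ghat) :
    LeftInverse (gInv ∘ ghat) (ghatInv ∘ g) := fun x => by
  obtain ⟨p, hp⟩ := hrange ⟨x, rfl⟩
  rw [comp_apply, comp_apply, ← hp, hghatInv p, hp, hgInv x]

theorem bijective_fst_apply_mk {α β : Type*} {h h' : α × β → α × β} (hleft : LeftInverse h' h)
    (hright : RightInverse h' h) (hh : ∀ c s t, (h (c, s)).1 = (h (c, t)).1)
    (hh' : ∀ c s t, (h' (c, s)).1 = (h' (c, t)).1) (b : β) : Bijective fun c => (h (c, b)).1 := by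
  refine bijective_iff_has_inverse.2 ⟨fun c => (h' (c, b)).1, fun c => ?_, fun c => ?_⟩
  · calc (h' ((h (c, b)).1, b)).1 = (h' ((h (c, b)).1, (h (c, b)).2)).1 := hh' _ _ _
      _ = c := by rw [Prod.mk.eta, hleft]
  · calc (h ((h' (c, b)).1, b)).1 = (h ((h' (c, b)).1, (h' (c, b)).2)).1 := hh _ _ _
      _ = c := by rw [Prod.mk.eta, hright]

section Blocks

variable {C S₁ S₂ V₁ V₂ : Type*}
  [NormedAddCommGroup C] [NormedSpace ℝ C] [FiniteDimensional ℝ C] [MeasurableSpace C]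
  [BorelSpace C] [NormedAddCommGroup S₁] [NormedSpace ℝ S₁] [FiniteDimensional ℝ S₁]
  [MeasurableSpace S₁] [BorelSpace S₁] [NormedAddCommGroup S₂] [NormedSpace ℝ S₂]
  [FiniteDimensional ℝ S₂] [MeasurableSpace S₂] [BorelSpace S₂]
  [NormedAddCommGroup V₁] [NormedSpace ℝ V₁] [NormedAddCommGroup V₂] [NormedSpace ℝ V₂]
  (ν₁ : Measure (C × S₁)) [ν₁.IsAddHaarMeasure] (ν₂ : Measure (C × S₂)) [ν₂.IsAddHaarMeasure]

theorem fst_apply_mk_eq_of_blockwise_comp_eq {h h' : C × S₁ × S₂ → C × S₁ × S₂}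
    (hh : ContDiff ℝ 1 h) (hh' : Differentiable ℝ h') (hleft : LeftInverse h' h)
    {f₁ g₁ : C × S₁ → V₁} {f₂ g₂ : C × S₂ → V₂} (hf₁ : Differentiable ℝ f₁)
    (hg₁ : Differentiable ℝ g₁) (hf₂ : Differentiable ℝ f₂) (hg₂ : Differentiable ℝ g₂)
    (hf₁inj : ∀ᵐ q ∂ν₁, Injective (fderiv ℝ f₁ q)) (hf₂inj : ∀ᵐ q ∂ν₂, Injective (fderiv ℝ f₂ q))
    (hcomp₁ : ∀ x, f₁ ((h x).1, (h x).2.1) = g₁ (x.1, x.2.1))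
    (hcomp₂ : ∀ x, f₂ ((h x).1, (h x).2.2) = g₂ (x.1, x.2.2)) (c : C) (s t : S₁ × S₂) :
    (h (c, s)).1 = (h (c, t)).1 := by
  let π₁ : C × S₁ × S₂ →L[ℝ] C × S₁ :=
    (ContinuousLinearMap.id ℝ C).prodMap (ContinuousLinearMap.fst ℝ S₁ S₂)
  let π₂ : C × S₁ × S₂ →L[ℝ] C × S₂ :=
    (ContinuousLinearMap.id ℝ C).prodMap (ContinuousLinearMap.snd ℝ S₁ S₂)
  let μ : Measure (C × S₁ × S₂) := Measure.addHaar
  have hqmp₁ : Measure.QuasiMeasurePreserving π₁ μ ν₁ :=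
    (π₁ : C × S₁ × S₂ →ₗ[ℝ] C × S₁).quasiMeasurePreserving_of_surjective μ ν₁
      fun q => ⟨(q.1, q.2, 0), rfl⟩
  have hqmp₂ : Measure.QuasiMeasurePreserving π₂ μ ν₂ :=
    (π₂ : C × S₁ × S₂ →ₗ[ℝ] C × S₂).quasiMeasurePreserving_of_surjective μ ν₂
      fun q => ⟨(q.1, 0, q.2), rfl⟩
  have hgood : ∀ᵐ x ∂μ,
      Injective (fderiv ℝ f₁ (π₁ (h x))) ∧ Injective (fderiv ℝ f₂ (π₂ (h x))) :=
    ae_comp_of_leftInverse μ hh' hleft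
      (p := fun y => Injective (fderiv ℝ f₁ (π₁ y)) ∧ Injective (fderiv ℝ f₂ (π₂ y)))
      ((hqmp₁.ae (p := fun q => Injective (fderiv ℝ f₁ q)) hf₁inj).and
        (hqmp₂.ae (p := fun q => Injective (fderiv ℝ f₂ q)) hf₂inj))
  refine apply_mk_eq_of_ae_fderiv_comp_inr_eq_zero μ (contDiff_fst.comp hh) ?_ c s t
  filter_upwards [hgood] with x ⟨hx₁, hx₂⟩
  have hx := hh.differentiable one_ne_zero x
  have hS₂ (w : S₂) : (fderiv ℝ h x (0, 0, w)).1 = 0 := congrArg Prod.fst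
    (map_fderiv_apply_eq_zero_of_comp_eq π₁ π₁ hcomp₁ hx (hf₁ _) (hg₁ _) hx₁ rfl)
  have hS₁ (u : S₁) : (fderiv ℝ h x (0, u, 0)).1 = 0 := congrArg Prod.fst
    (map_fderiv_apply_eq_zero_of_comp_eq π₂ π₂ hcomp₂ hx (hf₂ _) (hg₂ _) hx₂ rfl)
  rw [fderiv_comp x differentiableAt_fst hx, fderiv_fst]
  ext1
  · exact ContinuousLinearMap.ext hS₁
  · exact ContinuousLinearMap.ext hS₂

theorem fst_inv_comp_apply_mk_eq {g₁ ghat₁ : C × S₁ → V₁} {g₂ ghat₂ : C × S₂ → V₂}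
    (hg₁ : ContDiff ℝ 1 g₁) (hghat₁ : Differentiable ℝ ghat₁)
    (hg₂ : ContDiff ℝ 1 g₂) (hghat₂ : Differentiable ℝ ghat₂)
    (hghat₁inj : ∀ᵐ q ∂ν₁, Injective (fderiv ℝ ghat₁ q))
    (hghat₂inj : ∀ᵐ q ∂ν₂, Injective (fderiv ℝ ghat₂ q))
    {g ghat : C × S₁ × S₂ → V₁ × V₂}
    (hgdef : ∀ c s₁ s₂, g (c, s₁, s₂) = (g₁ (c, s₁), g₂ (c, s₂)))
    (hghatdef : ∀ c s₁ s₂, ghat (c, s₁, s₂) = (ghat₁ (c, s₁), ghat₂ (c, s₂)))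
    (hrange : Set.range g = Set.range ghat) {gInv ghatInv : V₁ × V₂ → C × S₁ × S₂}
    (hgInv : LeftInverse gInv g) (hgInvDiff : DifferentiableOn ℝ gInv (Set.range g))
    (hghatInv : LeftInverse ghatInv ghat) (hghatInvC1 : ContDiffOn ℝ 1 ghatInv (Set.range ghat))
    (c : C) (s t : S₁ × S₂) :
    (ghatInv (g (c, s))).1 = (ghatInv (g (c, t))).1 := by
  have hgx (x : C × S₁ × S₂) : g x = (g₁ (x.1, x.2.1), g₂ (x.1, x.2.2)) := hgdef x.1 x.2.1 x.2.2
  have hghatx (x : C × S₁ × S₂) : ghat x = (ghat₁ (x.1, x.2.1), ghat₂ (x.1, x.2.2)) :=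
    hghatdef x.1 x.2.1 x.2.2
  have hgC1 : ContDiff ℝ 1 g := by
    rw [funext hgx]
    fun_prop
  have hghatDiff : Differentiable ℝ ghat := by
    rw [funext hghatx]
    fun_prop
  have hghat_ghatInv (x : C × S₁ × S₂) : ghat (ghatInv (g x)) = g x := by
    obtain ⟨p, hp⟩ := hrange.subset ⟨x, rfl⟩
    rw [← hp, hghatInv p]
  refine fst_apply_mk_eq_of_blockwise_comp_eq ν₁ ν₂ (h := ghatInv ∘ g) (h' := gInv ∘ ghat)
    ?_ ?_ (hgInv.comp_of_range_subset hghatInv hrange.subset) hghat₁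
    (hg₁.differentiable one_ne_zero) hghat₂ (hg₂.differentiable one_ne_zero) hghat₁inj hghat₂inj
    (fun x => ?_) (fun x => ?_) c s t
  · exact contDiffOn_univ.1 (hghatInvC1.comp hgC1.contDiffOn fun x _ => hrange ▸ ⟨x, rfl⟩)
  · exact differentiableOn_univ.1
      (hgInvDiff.comp hghatDiff.differentiableOn fun x _ => hrange ▸ ⟨x, rfl⟩)
  · simpa only [comp_apply, hghatx] using congrArg Prod.fst ((hghat_ghatInv x).trans (hgx x))
  · simpa only [comp_apply, hghatx] using congrArg Prod.snd ((hghat_ghatInv x).trans (hgx x))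

end Blocks

theorem content_block_identifiable_ae_general
    {dc ds₁ ds₂ dv₁ dv₂ : ℕ}
    (g₁ ghat₁ : (Fin dc → ℝ) × (Fin ds₁ → ℝ) → (Fin dv₁ → ℝ))
    (g₂ ghat₂ : (Fin dc → ℝ) × (Fin ds₂ → ℝ) → (Fin dv₂ → ℝ))
    (hg₁ : ContDiff ℝ 1 g₁) (hghat₁ : ContDiff ℝ 1 ghat₁)
    (hg₂ : ContDiff ℝ 1 g₂) (hghat₂ : ContDiff ℝ 1 ghat₂)
    (hg₁inj : ∀ᵐ q ∂(volume : Measure ((Fin dc → ℝ) × (Fin ds₁ → ℝ))),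
      Function.Injective (fderiv ℝ g₁ q))
    (hghat₁inj : ∀ᵐ q ∂(volume : Measure ((Fin dc → ℝ) × (Fin ds₁ → ℝ))),
      Function.Injective (fderiv ℝ ghat₁ q))
    (hg₂inj : ∀ᵐ q ∂(volume : Measure ((Fin dc → ℝ) × (Fin ds₂ → ℝ))),
      Function.Injective (fderiv ℝ g₂ q))
    (hghat₂inj : ∀ᵐ q ∂(volume : Measure ((Fin dc → ℝ) × (Fin ds₂ → ℝ))),
      Function.Injective (fderiv ℝ ghat₂ q))
    (g ghat : (Fin dc → ℝ) × (Fin ds₁ → ℝ) × (Fin ds₂ → ℝ) → (Fin dv₁ → ℝ) × (Fin dv₂ → ℝ))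
    (hgdef : ∀ c s₁ s₂, g (c, s₁, s₂) = (g₁ (c, s₁), g₂ (c, s₂)))
    (hghatdef : ∀ c s₁ s₂, ghat (c, s₁, s₂) = (ghat₁ (c, s₁), ghat₂ (c, s₂)))
    (hrange : Set.range g = Set.range ghat)
    -- `g` is a `C¹` diffeomorphism onto the common range: its inverse is `C¹` there
    (gInv : (Fin dv₁ → ℝ) × (Fin dv₂ → ℝ) → (Fin dc → ℝ) × (Fin ds₁ → ℝ) × (Fin ds₂ → ℝ))
    (hgInv : ∀ p, gInv (g p) = p) (hgInvC1 : ContDiffOn ℝ 1 gInv (Set.range g))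
    -- likewise for `ghat`
    (ghatInv : (Fin dv₁ → ℝ) × (Fin dv₂ → ℝ) → (Fin dc → ℝ) × (Fin ds₁ → ℝ) × (Fin ds₂ → ℝ))
    (hghatInv : ∀ p, ghatInv (ghat p) = p) (hghatInvC1 : ContDiffOn ℝ 1 ghatInv (Set.range ghat)) :
    ∃ k : (Fin dc → ℝ) → (Fin dc → ℝ), Function.Bijective k ∧
      ∀ c s₁ s₂, (ghatInv (g (c, s₁, s₂))).1 = k c := by
  have hcontent := fst_inv_comp_apply_mk_eq volume volume hg₁ (hghat₁.differentiable one_ne_zero)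
    hg₂ (hghat₂.differentiable one_ne_zero) hghat₁inj hghat₂inj hgdef hghatdef hrange hgInv
    (hgInvC1.differentiableOn one_ne_zero) hghatInv hghatInvC1
  have hcontent' := fst_inv_comp_apply_mk_eq volume volume hghat₁ (hg₁.differentiable one_ne_zero)
    hghat₂ (hg₂.differentiable one_ne_zero) hg₁inj hg₂inj hghatdef hgdef hrange.symm hghatInv
    (hghatInvC1.differentiableOn one_ne_zero) hgInv hgInvC1
  exact ⟨fun c => (ghatInv (g (c, 0))).1,
    bijective_fst_apply_mk (LeftInverse.comp_of_range_subset hgInv hghatInv hrange.subset)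
      (LeftInverse.comp_of_range_subset hghatInv hgInv hrange.superset) hcontent hcontent' 0,
    fun c s₁ s₂ => hcontent c (s₁, s₂) 0⟩

/-- Block-identifiability of the shared content, with the almost-everywhere
non-singular Jacobian condition: `g₁, ghat₁, g₂, ghat₂` are `C¹` with Fréchet derivatives
injective at Lebesgue-almost every point, the assembled maps
`g (c, s₁, s₂) = (g₁ (c, s₁), g₂ (c, s₂))` and `ghat (c, s₁, s₂) = (ghat₁ (c, s₁), ghat₂ (c, s₂))`
are injective with the same range, and both are `C¹` diffeomorphisms onto this common
range (their inverses are `C¹` on it). Then the content block of `ghat⁻¹ ∘ g` is a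
bijection of `c`. -/
theorem content_block_identifiable_ae
    {dc ds₁ ds₂ dv₁ dv₂ : ℕ}
    (g₁ ghat₁ : (Fin dc → ℝ) × (Fin ds₁ → ℝ) → (Fin dv₁ → ℝ))
    (g₂ ghat₂ : (Fin dc → ℝ) × (Fin ds₂ → ℝ) → (Fin dv₂ → ℝ))
    (hg₁ : ContDiff ℝ 1 g₁) (hghat₁ : ContDiff ℝ 1 ghat₁)
    (hg₂ : ContDiff ℝ 1 g₂) (hghat₂ : ContDiff ℝ 1 ghat₂)
    (hg₁inj : ∀ᵐ q ∂(volume : Measure ((Fin dc → ℝ) × (Fin ds₁ → ℝ))),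
      Function.Injective (fderiv ℝ g₁ q))
    (hghat₁inj : ∀ᵐ q ∂(volume : Measure ((Fin dc → ℝ) × (Fin ds₁ → ℝ))),
      Function.Injective (fderiv ℝ ghat₁ q))
    (hg₂inj : ∀ᵐ q ∂(volume : Measure ((Fin dc → ℝ) × (Fin ds₂ → ℝ))),
      Function.Injective (fderiv ℝ g₂ q))
    (hghat₂inj : ∀ᵐ q ∂(volume : Measure ((Fin dc → ℝ) × (Fin ds₂ → ℝ))),
      Function.Injective (fderiv ℝ ghat₂ q))
    (g ghat : (Fin dc → ℝ) × (Fin ds₁ → ℝ) × (Fin ds₂ → ℝ) → (Fin dv₁ → ℝ) × (Fin dv₂ → ℝ))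
    (hgdef : ∀ c s₁ s₂, g (c, s₁, s₂) = (g₁ (c, s₁), g₂ (c, s₂)))
    (hghatdef : ∀ c s₁ s₂, ghat (c, s₁, s₂) = (ghat₁ (c, s₁), ghat₂ (c, s₂)))
    (hginj : Function.Injective g) (hghatinj : Function.Injective ghat)
    (hrange : Set.range g = Set.range ghat)
    -- `g` is a `C¹` diffeomorphism onto the common range: its inverse is `C¹` there
    (gInv : (Fin dv₁ → ℝ) × (Fin dv₂ → ℝ) → (Fin dc → ℝ) × (Fin ds₁ → ℝ) × (Fin ds₂ → ℝ))
    (hgInv : ∀ p, gInv (g p) = p) (hgInvC1 : ContDiffOn ℝ 1 gInv (Set.range g))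
    -- likewise for `ghat`
    (ghatInv : (Fin dv₁ → ℝ) × (Fin dv₂ → ℝ) → (Fin dc → ℝ) × (Fin ds₁ → ℝ) × (Fin ds₂ → ℝ))
    (hghatInv : ∀ p, ghatInv (ghat p) = p) (hghatInvC1 : ContDiffOn ℝ 1 ghatInv (Set.range ghat)) :
    ∃ k : (Fin dc → ℝ) → (Fin dc → ℝ), Function.Bijective k ∧
      ∀ c s₁ s₂, (ghatInv (g (c, s₁, s₂))).1 = k c :=
  content_block_identifiable_ae_general g₁ ghat₁ g₂ ghat₂ hg₁ hghat₁ hg₂ hghat₂ hg₁inj hghat₁inj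
    hg₂inj hghat₂inj g ghat hgdef hghatdef hrange gInv hgInv hgInvC1 ghatInv hghatInv hghatInvC1
end
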